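/- arXiv:math/0211179 — 8 statements merged into one kernel-verified Lean document; each statement's English description precedes it below -/
import Mathlib

section
/- The 4-uniform hypergraph B(n,t), obtained by partitioning an n-set into two parts of sizes n/2+t and n/2-t and taking as edges all 4-sets with exactly one vertex in one part and three in the other, contains no copy of C^(4)_3 (three pairwise disjoint pairs P1,P2,P3 of vertices with all three unions P_i ∪ P_j being edges). -/
/-!
An edge of `B(n,t)` meets `V1` in an odd number of vertices. For pairwise disjoint
`P1, P2, P3`, the three counts `|(Pᵢ ∪ Pⱼ) ∩ V1|` add up to `2 |(P1 ∪ P2 ∪ P3) ∩ V1|`,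
which is even, so they cannot all be odd.
-/

namespace Finset

variable {α : Type*} [DecidableEq α]

theorem card_union_inter_of_disjoint {P Q : Finset α} (s : Finset α) (h : Disjoint P Q) :
    #((P ∪ Q) ∩ s) = #(P ∩ s) + #(Q ∩ s) := by
  rw [union_inter_distrib_right,
    card_union_of_disjoint (h.mono inter_subset_left inter_subset_left)]

theorem not_odd_card_union_inter_of_pairwise_disjoint (s : Finset α) {P₁ P₂ P₃ : Finset α}
    (h₁₂ : Disjoint P₁ P₂) (h₁₃ : Disjoint P₁ P₃) (h₂₃ : Disjoint P₂ P₃) :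
    ¬ (Odd #((P₁ ∪ P₂) ∩ s) ∧ Odd #((P₁ ∪ P₃) ∩ s) ∧ Odd #((P₂ ∪ P₃) ∩ s)) := by
  rw [card_union_inter_of_disjoint s h₁₂, card_union_inter_of_disjoint s h₁₃,
    card_union_inter_of_disjoint s h₂₃]
  rintro ⟨⟨a, ha⟩, ⟨b, hb⟩, ⟨c, hc⟩⟩
  omega

end Finset

theorem stmt_1_general {V : Type*} [DecidableEq V] (V1 : Finset V)
    (IsEdge : Finset V → Prop)
    (hEdge : ∀ e : Finset V, IsEdge e ↔
      ((e ∩ V1).card = 1 ∧ (e \ V1).card = 3) ∨ ((e ∩ V1).card = 3 ∧ (e \ V1).card = 1))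
    (P1 P2 P3 : Finset V)
    (d12 : Disjoint P1 P2) (d13 : Disjoint P1 P3) (d23 : Disjoint P2 P3) :
    ¬ (IsEdge (P1 ∪ P2) ∧ IsEdge (P1 ∪ P3) ∧ IsEdge (P2 ∪ P3)) := by
  have odd_of_isEdge : ∀ e, IsEdge e → Odd (e ∩ V1).card := by
    intro e he
    rcases (hEdge e).1 he with ⟨h, -⟩ | ⟨h, -⟩ <;> rw [h] <;> decide
  rintro ⟨e12, e13, e23⟩
  exact Finset.not_odd_card_union_inter_of_pairwise_disjoint V1 d12 d13 d23
    ⟨odd_of_isEdge _ e12, odd_of_isEdge _ e13, odd_of_isEdge _ e23⟩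

/-- the hypergraph `B(n,t)` (edges = 4-sets with exactly one vertex in one
part, three in the other part of a bipartition) contains no copy of `C^(4)_3`. -/
theorem stmt_1 {V : Type*} [DecidableEq V] (V1 : Finset V)
    (IsEdge : Finset V → Prop)
    (hEdge : ∀ e : Finset V, IsEdge e ↔
      ((e ∩ V1).card = 1 ∧ (e \ V1).card = 3) ∨ ((e ∩ V1).card = 3 ∧ (e \ V1).card = 1))
    (P1 P2 P3 : Finset V)
    (h1 : P1.card = 2) (h2 : P2.card = 2) (h3 : P3.card = 2)
    (d12 : Disjoint P1 P2) (d13 : Disjoint P1 P3) (d23 : Disjoint P2 P3) :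
    ¬ (IsEdge (P1 ∪ P2) ∧ IsEdge (P1 ∪ P3) ∧ IsEdge (P2 ∪ P3)) :=
  stmt_1_general V1 IsEdge hEdge P1 P2 P3 d12 d13 d23
end

section
/- Partition the vertex set V into two parts V1, V2 and let H be the 2k-uniform hypergraph whose edges are all 2k-subsets of V that intersect each of V1 and V2 in an odd number of elements. Then H contains no copy of C^(2k)_3, i.e., there do not exist pairwise disjoint k-sets P1, P2, P3 such that all three unions P_i ∪ P_j (i≠j) are edges of H. -/
/-! Each edge `Pi ∪ Pj` meets `V1` in `|Pi ∩ V1| + |Pj ∩ V1|` elements, so the three parities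
`|Pi ∩ V1| mod 2` would have to be pairwise distinct, which is impossible with only two values. -/

theorem Finset.card_union_inter_of_disjoint_s2 {α : Type*} [DecidableEq α] {P Q : Finset α}
    (s : Finset α) (h : Disjoint P Q) : ((P ∪ Q) ∩ s).card = (P ∩ s).card + (Q ∩ s).card := by
  rw [Finset.union_inter_distrib_right,
    Finset.card_union_of_disjoint (h.mono Finset.inter_subset_left Finset.inter_subset_left)]

theorem Nat.not_odd_add_pairwise (a b c : ℕ) :
    ¬ (Odd (a + b) ∧ Odd (a + c) ∧ Odd (b + c)) := by
  rintro ⟨hab, hac, hbc⟩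
  have hsum : Odd ((a + b) + (a + c) + (b + c)) := (hab.add_odd hac).add_odd hbc
  exact Nat.not_even_iff_odd.mpr hsum ⟨a + b + c, by ring⟩

theorem stmt_2_general {V : Type*} [DecidableEq V] (k : ℕ) (V1 : Finset V)
    (IsEdge : Finset V → Prop)
    (hEdge : ∀ e : Finset V, IsEdge e ↔
      e.card = 2 * k ∧ Odd (e ∩ V1).card ∧ Odd (e \ V1).card)
    (P1 P2 P3 : Finset V)
    (d12 : Disjoint P1 P2) (d13 : Disjoint P1 P3) (d23 : Disjoint P2 P3) :
    ¬ (IsEdge (P1 ∪ P2) ∧ IsEdge (P1 ∪ P3) ∧ IsEdge (P2 ∪ P3)) := by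
  rintro ⟨e12, e13, e23⟩
  have odd_inter {P Q : Finset V} (hPQ : Disjoint P Q) (e : IsEdge (P ∪ Q)) :
      Odd ((P ∩ V1).card + (Q ∩ V1).card) :=
    Finset.card_union_inter_of_disjoint_s2 V1 hPQ ▸ ((hEdge _).mp e).2.1
  exact Nat.not_odd_add_pairwise _ _ _ ⟨odd_inter d12 e12, odd_inter d13 e13, odd_inter d23 e23⟩

/-- the 2k-uniform hypergraph whose edges are the 2k-sets intersecting each
part of a bipartition `V = V1 ∪ V1ᶜ` in an odd number of elements contains no `C^(2k)_3`. -/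
theorem stmt_2 {V : Type*} [DecidableEq V] (k : ℕ) (hk : 0 < k) (V1 : Finset V)
    (IsEdge : Finset V → Prop)
    (hEdge : ∀ e : Finset V, IsEdge e ↔
      e.card = 2 * k ∧ Odd (e ∩ V1).card ∧ Odd (e \ V1).card)
    (P1 P2 P3 : Finset V)
    (h1 : P1.card = k) (h2 : P2.card = k) (h3 : P3.card = k)
    (d12 : Disjoint P1 P2) (d13 : Disjoint P1 P3) (d23 : Disjoint P2 P3) :
    ¬ (IsEdge (P1 ∪ P2) ∧ IsEdge (P1 ∪ P3) ∧ IsEdge (P2 ∪ P3)) :=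
  stmt_2_general k V1 IsEdge hEdge P1 P2 P3 d12 d13 d23
end

section
/- If H is a 2k-uniform hypergraph on n vertices with no copy of C^(2k)_3, then the number of edges of H is at most binom(n,k)^2 / (2 * binom(2k,k)); in particular the Turán density of C^(2k)_3 is at most 1/2. -/
/-!
Join two `k`-sets by an edge when they are disjoint and their union is an edge of `H`. A triangle
in this graph is exactly a copy of `C^(2k)_3` in `H`, so the graph is triangle-free, and Mantel's
theorem bounds its number of edges by `binom(n,k)^2 / 4`. Every edge `e` of `H` contributes one
such pair for each of its `binom(2k,k)` ordered splittings into two `k`-sets, i.e.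
`binom(2k,k) / 2` edges.
-/

open Finset

namespace SimpleGraph

theorem CliqueFree.four_mul_card_edgeFinset_le {α : Type*} [Fintype α] {G : SimpleGraph α}
    [DecidableRel G.Adj] (hG : G.CliqueFree 3) : 4 * #G.edgeFinset ≤ Fintype.card α ^ 2 := by
  have h := hG.card_edgeFinset_le (r := 2)
  simp only [Nat.choose_eq_zero_of_lt (Nat.mod_lt _ two_pos), add_zero] at h
  lia

end SimpleGraph

section UnionGraph

variable {V : Type*} [DecidableEq V]

/-- `a ≠ b` is only needed for `k = 0`, where `∅` is disjoint from itself. -/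
def unionGraph (H : Finset (Finset V)) (k : ℕ) : SimpleGraph {s : Finset V // s.card = k} where
  Adj a b := a ≠ b ∧ Disjoint a.1 b.1 ∧ a.1 ∪ b.1 ∈ H
  symm := ⟨fun _ _ ⟨hne, hd, hu⟩ => ⟨hne.symm, hd.symm, union_comm (α := V) _ _ ▸ hu⟩⟩
  loopless := ⟨fun _ h => h.1 rfl⟩

variable (H : Finset (Finset V))

theorem unionGraph_adj {k : ℕ} {a b : {s : Finset V // s.card = k}} :
    (unionGraph H k).Adj a b ↔ a ≠ b ∧ Disjoint a.1 b.1 ∧ a.1 ∪ b.1 ∈ H :=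
  Iff.rfl

instance (k : ℕ) : DecidableRel (unionGraph H k).Adj := fun _ _ =>
  decidable_of_iff' _ (unionGraph_adj H)

theorem unionGraph_adj_of_pos {k : ℕ} (hk : 0 < k) {a b : {s : Finset V // s.card = k}} :
    (unionGraph H k).Adj a b ↔ Disjoint a.1 b.1 ∧ a.1 ∪ b.1 ∈ H := by
  rw [unionGraph_adj]
  refine ⟨And.right, fun h => ⟨?_, h⟩⟩
  rintro rfl
  have := a.2
  rw [(disjoint_self_iff_empty _).1 h.1, card_empty] at this
  lia

theorem unionGraph_cliqueFree (k : ℕ)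
    (hfree : ¬ ∃ P1 P2 P3 : Finset V,
      P1.card = k ∧ P2.card = k ∧ P3.card = k ∧
      Disjoint P1 P2 ∧ Disjoint P1 P3 ∧ Disjoint P2 P3 ∧
      (P1 ∪ P2) ∈ H ∧ (P1 ∪ P3) ∈ H ∧ (P2 ∪ P3) ∈ H) :
    (unionGraph H k).CliqueFree 3 := by
  rintro s hs
  obtain ⟨a, b, c, ⟨-, hab, hab'⟩, ⟨-, hac, hac'⟩, ⟨-, hbc, hbc'⟩, -⟩ :=
    SimpleGraph.is3Clique_iff.1 hs
  exact hfree ⟨a, b, c, a.2, b.2, c.2, hab, hac, hbc, hab', hac', hbc'⟩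

theorem sum_degree_unionGraph [Fintype V] {k : ℕ} (hk : 0 < k) (hH : ∀ e ∈ H, e.card = 2 * k) :
    ∑ a, (unionGraph H k).degree a = #H * (2 * k).choose k := by
  calc ∑ a, (unionGraph H k).degree a
      = #(univ.sigma fun a => univ.filter ((unionGraph H k).Adj a)) := by
        simp only [card_sigma, ← SimpleGraph.card_neighborFinset_eq_degree,
          SimpleGraph.neighborFinset_eq_filter]
    _ = #(H.sigma fun e => e.powersetCard k) := by
        have mem_left {p} (hp : p ∈ univ.sigma fun a => univ.filter ((unionGraph H k).Adj a)) :
            Disjoint p.1.1 p.2.1 ∧ p.1.1 ∪ p.2.1 ∈ H := by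
          simpa [unionGraph_adj_of_pos H hk] using hp
        have mem_right {q} (hq : q ∈ H.sigma fun e => e.powersetCard k) :
            q.1 ∈ H ∧ q.2 ⊆ q.1 ∧ #q.2 = k := by
          simpa using hq
        refine card_bij' (fun p _ => ⟨p.1.1 ∪ p.2.1, p.1.1⟩)
          (fun q hq => ⟨⟨q.2, (mem_right hq).2.2⟩, ⟨q.1 \ q.2, ?_⟩⟩) ?_ ?_ ?_ ?_
        · obtain ⟨he, hsub, hs⟩ := mem_right hq
          rw [card_sdiff_of_subset hsub, hH _ he, hs]
          lia
        · rintro ⟨a, b⟩ hp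
          simp [(mem_left hp).2, subset_union_left, a.2]
        · rintro ⟨e, s⟩ hq
          obtain ⟨he, hsub, -⟩ := mem_right hq
          simp [unionGraph_adj_of_pos H hk, disjoint_sdiff, union_sdiff_of_subset hsub, he]
        · rintro ⟨a, b⟩ hp
          simp [union_sdiff_cancel_left (mem_left hp).1]
        · rintro ⟨e, s⟩ hq
          simp [union_sdiff_of_subset (mem_right hq).2.1]
    _ = #H * (2 * k).choose k := by
        rw [card_sigma, sum_const_nat fun e he => by rw [card_powersetCard, hH e he]]

end UnionGraph

/-- a 2k-uniform hypergraph on `n` vertices with no copy of `C^(2k)_3` has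
at most `binom(n,k)^2 / (2 * binom(2k,k))` edges. -/
theorem stmt_4 {V : Type*} [Fintype V] [DecidableEq V] (k : ℕ) (hk : 0 < k)
    (H : Finset (Finset V)) (hH : ∀ e ∈ H, e.card = 2 * k)
    (hfree : ¬ ∃ P1 P2 P3 : Finset V,
      P1.card = k ∧ P2.card = k ∧ P3.card = k ∧
      Disjoint P1 P2 ∧ Disjoint P1 P3 ∧ Disjoint P2 P3 ∧
      (P1 ∪ P2) ∈ H ∧ (P1 ∪ P3) ∈ H ∧ (P2 ∪ P3) ∈ H) :
    (H.card : ℝ) ≤ ((Fintype.card V).choose k : ℝ) ^ 2 / (2 * ((2 * k).choose k)) := by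
  have mantel := (unionGraph_cliqueFree H k hfree).four_mul_card_edgeFinset_le
  have double_count := sum_degree_unionGraph H hk hH
  rw [SimpleGraph.sum_degrees_eq_twice_card_edges] at double_count
  rw [Fintype.card_finset_len] at mantel
  have choose_pos : 0 < (2 * k).choose k := Nat.choose_pos (by lia)
  rw [le_div_iff₀ (by positivity)]
  exact_mod_cast (by lia : #H * (2 * (2 * k).choose k) ≤ (Fintype.card V).choose k ^ 2)
end

section
/- Let K_m^n(x) be the binary Krawtchouk polynomial defined by K_m^n(x) = sum_{i=0}^m (-1)^i * binom(x,i) * binom(n-x, m-i). Then for all real t, K_m^n(n/2 + t) = sum_{i=0}^{floor(m/2)} (-1)^{i+m} * binom(n/2 - t, i) * binom(2t, m-2i). -/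
/-- Generalized binomial coefficient `binom(x,j) = x(x-1)⋯(x-j+1)/j!` for real `x`. -/
noncomputable def rchoose (x : ℝ) (j : ℕ) : ℝ :=
  (∏ i ∈ Finset.range j, (x - i)) / (Nat.factorial j)

open Finset Polynomial in
lemma desc_smeval (x : ℝ) (k : ℕ) :
    (descPochhammer ℤ k).smeval x = ∏ i ∈ Finset.range k, (x - i) := by
  induction k with
  | zero => simp [descPochhammer_zero, Polynomial.smeval_one]
  | succ k ih =>
      rw [descPochhammer_succ_right, Polynomial.smeval_mul, ih, Finset.prod_range_succ,
        Polynomial.smeval_sub, Polynomial.smeval_X, Polynomial.smeval_natCast]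
      simp

lemma rchoose_eq (x : ℝ) (k : ℕ) : rchoose x k = Ring.choose x k := by
  have h := Ring.descPochhammer_eq_factorial_smul_choose x k
  rw [desc_smeval] at h
  rw [rchoose, h, nsmul_eq_mul]
  field_simp [Nat.factorial_ne_zero]

lemma rchoose_natCast (n k : ℕ) : rchoose (n : ℝ) k = n.choose k := by
  rw [rchoose_eq, Ring.choose_natCast]

open Finset in
lemma rchoose_add (x y : ℝ) (m : ℕ) :
    rchoose (x + y) m = ∑ ij ∈ Finset.HasAntidiagonal.antidiagonal m, rchoose x ij.1 * rchoose y ij.2 := by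
  simp only [rchoose_eq]
  exact Ring.add_choose_eq m (Commute.all x y)

set_option maxRecDepth 10000 in
open Polynomial Finset in
lemma coeff_one_sub_X_pow_pow (d n k : ℕ) (hd : 0 < d) :
    ((1 - X ^ d : Polynomial ℝ) ^ n).coeff k =
      if d ∣ k then (-1 : ℝ) ^ (k / d) * n.choose (k / d) else 0 := by
  have h1 : (1 - X ^ d : Polynomial ℝ) = (-(X ^ d)) + 1 := by ring
  rw [h1, add_pow, Polynomial.finset_sum_coeff]
  have hterm : ∀ i ∈ range (n+1), ((-(X^d) : Polynomial ℝ)^i * 1^(n-i) * (n.choose i : Polynomial ℝ)).coeff k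
      = if k = d * i then (-1:ℝ)^i * (n.choose i : ℝ) else 0 := by
    intro i _
    have h2 : (-(X^d) : Polynomial ℝ)^i * 1^(n-i) * (n.choose i : Polynomial ℝ)
        = ((-1:ℝ)^i * (n.choose i : ℝ)) • X^(d*i) := by
      rw [one_pow, mul_one, Polynomial.smul_eq_C_mul, map_mul, map_pow, map_neg, map_one,
        neg_pow, pow_mul]
      rw [Polynomial.C_eq_natCast]
      ring
    rw [h2, Polynomial.coeff_smul, Polynomial.coeff_X_pow, smul_eq_mul, mul_ite, mul_one, mul_zero]
  rw [Finset.sum_congr rfl hterm]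
  by_cases hdvd : d ∣ k
  · obtain ⟨c, rfl⟩ := hdvd
    rw [Nat.mul_div_cancel_left c hd, if_pos ⟨c, rfl⟩]
    by_cases hc : c < n + 1
    · rw [Finset.sum_eq_single c]
      · simp
      · intro b _ hb
        rw [if_neg (by simpa [Nat.mul_left_cancel_iff hd] using (Ne.symm hb))]
      · intro h; exact absurd hc (by simpa using h)
    · rw [Finset.sum_eq_zero, Nat.choose_eq_zero_of_lt (by omega)]
      · simp
      · intro b hb
        rw [if_neg]
        simp only [Finset.mem_range] at hb
        intro h
        have : c = b := Nat.eq_of_mul_eq_mul_left hd h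
        omega
  · rw [if_neg hdvd, Finset.sum_eq_zero]
    intro b _
    rw [if_neg]
    intro h
    exact hdvd ⟨b, h⟩

open Polynomial Finset in
lemma nat_even_id (n k : ℕ) :
    ∑ ij ∈ Finset.HasAntidiagonal.antidiagonal k, (-1 : ℝ) ^ ij.1 * (n.choose ij.1) * (n.choose ij.2) =
      if 2 ∣ k then (-1 : ℝ) ^ (k / 2) * n.choose (k / 2) else 0 := by
  have hprod : ((1 - X : Polynomial ℝ) ^ n) * ((1 + X) ^ n) = (1 - X ^ 2) ^ n := by
    rw [← mul_pow]; ring_nf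
  have h := congrArg (fun p => Polynomial.coeff p k) hprod
  simp only [Polynomial.coeff_mul] at h
  rw [coeff_one_sub_X_pow_pow 2 n k (by norm_num)] at h
  rw [← h]
  refine Finset.sum_congr rfl fun ij _ => ?_
  have e1 : ((1 - X : Polynomial ℝ) ^ n).coeff ij.1 = (-1:ℝ)^ij.1 * n.choose ij.1 := by
    have := coeff_one_sub_X_pow_pow 1 n ij.1 (by norm_num)
    simpa using this
  rw [e1, Polynomial.coeff_one_add_X_pow, mul_assoc]

noncomputable def rpoly (j : ℕ) : Polynomial ℝ :=
  Polynomial.C (((Nat.factorial j : ℝ))⁻¹) * ∏ i ∈ Finset.range j, (Polynomial.X - Polynomial.C (i : ℝ))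

lemma rpoly_eval (x : ℝ) (j : ℕ) : (rpoly j).eval x = rchoose x j := by
  simp [rpoly, rchoose, Polynomial.eval_prod, div_eq_mul_inv, mul_comm]

open Polynomial Finset in
lemma even_id (v : ℝ) (k : ℕ) :
    ∑ ij ∈ Finset.HasAntidiagonal.antidiagonal k, (-1 : ℝ) ^ ij.1 * rchoose v ij.1 * rchoose v ij.2 =
      if 2 ∣ k then (-1 : ℝ) ^ (k / 2) * rchoose v (k / 2) else 0 := by
  have key : (∑ ij ∈ Finset.HasAntidiagonal.antidiagonal k, ((-1 : ℝ) ^ ij.1) • (rpoly ij.1 * rpoly ij.2)) =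
      (if 2 ∣ k then ((-1 : ℝ) ^ (k / 2)) • rpoly (k / 2) else 0) := by
    apply Polynomial.eq_of_infinite_eval_eq
    apply Set.Infinite.mono (s := Set.range ((↑·) : ℕ → ℝ))
    · rintro - ⟨n, rfl⟩
      simp only [Set.mem_setOf_eq, Polynomial.eval_finset_sum, Polynomial.eval_smul,
        Polynomial.eval_mul, rpoly_eval, smul_eq_mul, rchoose_natCast,
        apply_ite (Polynomial.eval (n:ℝ)), Polynomial.eval_zero]
      rw [← nat_even_id n k]
      exact Finset.sum_congr rfl fun ij _ => by ring
    · exact Set.infinite_range_of_injective Nat.cast_injective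
  have h := congrArg (Polynomial.eval v) key
  simp only [Polynomial.eval_finset_sum, Polynomial.eval_smul, Polynomial.eval_mul,
    rpoly_eval, smul_eq_mul, apply_ite (Polynomial.eval v), Polynomial.eval_zero] at h
  rw [← h]
  exact Finset.sum_congr rfl fun ij _ => by ring

noncomputable def psA (x : ℝ) : PowerSeries ℝ :=
  PowerSeries.mk fun k => (-1 : ℝ) ^ k * rchoose x k

noncomputable def psB (x : ℝ) : PowerSeries ℝ :=
  PowerSeries.mk fun k => rchoose x k

noncomputable def psD (x : ℝ) : PowerSeries ℝ :=
  PowerSeries.mk fun k => if 2 ∣ k then (-1 : ℝ) ^ (k / 2) * rchoose x (k / 2) else 0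

open Finset in
lemma psA_mul (x y : ℝ) : psA x * psA y = psA (x + y) := by
  ext k
  rw [PowerSeries.coeff_mul]
  simp only [psA, PowerSeries.coeff_mk]
  rw [rchoose_add, Finset.mul_sum]
  refine Finset.sum_congr rfl fun ij hij => ?_
  rw [Finset.HasAntidiagonal.mem_antidiagonal] at hij
  rw [← hij, pow_add]
  ring

open Finset in
lemma psA_mul_psB (x : ℝ) : psA x * psB x = psD x := by
  ext k
  rw [PowerSeries.coeff_mul]
  simp only [psA, psB, psD, PowerSeries.coeff_mk]
  rw [← even_id x k]

open Finset in
lemma sum_even_reindex (m : ℕ) (G : ℕ → ℝ) :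
    ∑ k ∈ Finset.range (m + 1), (if 2 ∣ k then G k else 0) =
      ∑ i ∈ Finset.range (m / 2 + 1), G (2 * i) := by
  rw [← Finset.sum_filter]
  apply Finset.sum_nbij' (fun k => k / 2) (fun i => 2 * i)
  · intro a ha
    simp only [Finset.mem_filter, Finset.mem_range] at ha
    simp only [Finset.mem_range]
    omega
  · intro b hb
    simp only [Finset.mem_range] at hb
    simp only [Finset.mem_filter, Finset.mem_range]
    omega
  · intro a ha
    simp only [Finset.mem_filter, Finset.mem_range] at ha
    omega
  · intro b hb
    omega
  · intro a ha
    simp only [Finset.mem_filter, Finset.mem_range] at ha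
    congr 1
    omega

open Finset in
lemma key (u v : ℝ) (m : ℕ) :
    ∑ i ∈ Finset.range (m + 1), (-1 : ℝ) ^ i * rchoose u i * rchoose v (m - i) =
      ∑ i ∈ Finset.range (m / 2 + 1),
        (-1 : ℝ) ^ (i + m) * rchoose v i * rchoose (u - v) (m - 2 * i) := by
  have h1 : psA u * psB v = psD v * psA (u - v) := by
    rw [← psA_mul_psB v, mul_comm (psA v) (psB v), mul_assoc, psA_mul,
      show v + (u - v) = u by ring, mul_comm]
  have h2 := congrArg (PowerSeries.coeff m) h1
  rw [PowerSeries.coeff_mul, PowerSeries.coeff_mul] at h2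
  simp only [psA, psB, psD, PowerSeries.coeff_mk] at h2
  rw [Finset.Nat.sum_antidiagonal_eq_sum_range_succ_mk] at h2
  rw [Finset.Nat.sum_antidiagonal_eq_sum_range_succ_mk
    (fun ij => (if 2 ∣ ij.1 then (-1:ℝ)^(ij.1/2) * rchoose v (ij.1/2) else 0) *
      ((-1:ℝ)^ij.2 * rchoose (u - v) ij.2))] at h2
  simp only [mul_assoc] at h2 ⊢
  rw [h2]
  simp only [ite_mul, zero_mul]
  rw [sum_even_reindex m
    (fun k => (-1:ℝ)^(k/2) * rchoose v (k/2) * ((-1:ℝ)^(m - k) * rchoose (u - v) (m - k)))]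
  refine Finset.sum_congr rfl fun i hi => ?_
  rw [Finset.mem_range] at hi
  have h2i : 2 * i ≤ m := by omega
  have hsgn : (-1:ℝ)^(m - 2*i) = (-1:ℝ)^m := by
    have : (-1:ℝ)^(m - 2*i) * (-1:ℝ)^(2*i) = (-1:ℝ)^m := by
      rw [← pow_add, Nat.sub_add_cancel h2i]
    rwa [pow_mul, neg_one_sq, one_pow, mul_one] at this
  rw [Nat.mul_div_cancel_left i (by norm_num), hsgn, pow_add]
  ring

/-- The binary Krawtchouk polynomial `K_m^n(x) = ∑_{i=0}^m (-1)^i binom(x,i) binom(n-x,m-i)`. -/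
noncomputable def kraw (m n : ℕ) (x : ℝ) : ℝ :=
  ∑ i ∈ Finset.range (m + 1), (-1 : ℝ) ^ i * rchoose x i * rchoose ((n : ℝ) - x) (m - i)

/-- `K_m^n(n/2 + t) = ∑_{i=0}^{⌊m/2⌋} (-1)^{i+m} binom(n/2-t, i) binom(2t, m-2i)`. -/
theorem stmt_6 (m n : ℕ) (t : ℝ) :
    kraw m n ((n : ℝ) / 2 + t) =
      ∑ i ∈ Finset.range (m / 2 + 1),
        (-1 : ℝ) ^ (i + m) * rchoose ((n : ℝ) / 2 - t) i * rchoose (2 * t) (m - 2 * i) := by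
  have hv : (n : ℝ) - ((n : ℝ) / 2 + t) = (n : ℝ) / 2 - t := by ring
  have hd : ((n : ℝ) / 2 + t) - ((n : ℝ) / 2 - t) = 2 * t := by ring
  rw [kraw, hv, key ((n : ℝ) / 2 + t) ((n : ℝ) / 2 - t) m, hd]
end

section
/- Let b_{2k}(n) = max_t b_{2k}(n,t) be the maximum number of edges of the hypergraph B^(2k)(n,t) over valid t. Then b_{2k}(n) - b_{2k}(n-1) ≥ (1/2) * binom(n-1, 2k-1). -/
/-- The number of edges of `B^(2k)` on vertex set `Fin n` determined by the part `A`: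
the number of `2k`-subsets having odd intersection with both `A` and its complement. -/
def bpart (k n : ℕ) (A : Finset (Fin n)) : ℕ :=
  (Finset.univ.filter (fun X : Finset (Fin n) =>
    X.card = 2 * k ∧ Odd (X ∩ A).card ∧ Odd (X \ A).card)).card

/-- `b_{2k}(n)`: the maximum of `b_{2k}(n,t)` over all choices of the bipartition. -/
def bmax (k n : ℕ) : ℕ :=
  Finset.univ.sup (fun A : Finset (Fin n) => bpart k n A)

/-!
Take a part `A` of `Fin m` attaining `b_{2k}(m)` and put the new vertex either into `A` or into
its complement. A `2k`-set avoiding the new vertex is an edge for either choice exactly when it is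
an edge of the old hypergraph, while each `(2k-1)`-set of old vertices extends through the new
vertex to an edge for exactly one of the two choices. So the two edge counts add up to
`2 b_{2k}(m) + binom(m, 2k-1)`, and the larger one is at least half of that.
-/

open Finset

section OddEdges

variable {α : Type*} [DecidableEq α]

/-- For even `r`, the edges of `B^(r)` on `s` with parts `A` and `s \ A`: an odd intersection
with `A` forces an odd intersection with `s \ A`. -/
def oddEdges (r : ℕ) (s A : Finset α) : Finset (Finset α) :=
  (s.powersetCard r).filter fun X => Odd #(X ∩ A)

theorem odd_card_inter_iff_odd_card_sdiff {X : Finset α} (A : Finset α) (hX : Even #X) :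
    Odd #(X ∩ A) ↔ Odd #(X \ A) := by
  rw [← card_sdiff_add_card_inter X A, Nat.even_add] at hX
  simp only [← Nat.not_even_iff_odd, hX]

theorem card_oddEdges_map {β : Type*} [DecidableEq β] (f : α ↪ β) (r : ℕ) (s A : Finset α) :
    #(oddEdges r (s.map f) (A.map f)) = #(oddEdges r s A) := by
  simp [oddEdges, powersetCard_map, filter_map, ← map_inter]

theorem card_oddEdges_insert {a : α} {s : Finset α} (ha : a ∉ s) (r : ℕ) (A : Finset α) :
    #(oddEdges (r + 1) (insert a s) A) =
      #(oddEdges (r + 1) s A) + #((s.powersetCard r).filter fun Y => Odd #(insert a Y ∩ A)) := by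
  have hnot_mem {Y : Finset α} (hY : Y ∈ s.powersetCard r) : a ∉ Y :=
    fun h => ha ((mem_powersetCard.1 hY).1 h)
  rw [oddEdges, powersetCard_succ_insert ha, filter_union, filter_image,
    card_union_of_disjoint, card_image_of_injOn, oddEdges]
  · intro Y hY Y' hY' h
    rw [← erase_insert (hnot_mem (mem_filter.1 hY).1),
      ← erase_insert (hnot_mem (mem_filter.1 hY').1)]
    exact congrArg (·.erase a) h
  · refine disjoint_left.2 fun X hX hX' => ?_
    obtain ⟨Y, -, rfl⟩ := mem_image.1 hX'
    exact ha ((mem_powersetCard.1 (mem_filter.1 hX).1).1 (mem_insert_self a Y))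

theorem card_oddEdges_insert_add {a : α} {s A : Finset α} (ha : a ∉ s) (haA : a ∉ A) (r : ℕ) :
    #(oddEdges (r + 1) (insert a s) A) + #(oddEdges (r + 1) (insert a s) (insert a A)) =
      2 * #(oddEdges (r + 1) s A) + (#s).choose r := by
  have h_old : oddEdges (r + 1) s (insert a A) = oddEdges (r + 1) s A := by
    refine filter_congr fun X hX => ?_
    rw [inter_insert_of_notMem fun h => ha ((mem_powersetCard.1 hX).1 h)]
  have h_new : ∀ Y ∈ s.powersetCard r,
      Odd #(insert a Y ∩ insert a A) ↔ ¬Odd #(insert a Y ∩ A) := by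
    intro Y hY
    have haY : a ∉ Y ∩ A := fun h => haA (mem_inter.1 h).2
    rw [← insert_inter_distrib, card_insert_of_notMem haY, insert_inter_of_notMem haA,
      Nat.odd_add_one]
  rw [card_oddEdges_insert ha, card_oddEdges_insert ha, h_old, filter_congr h_new]
  have h_split := card_filter_add_card_filter_not (s := s.powersetCard r)
    (fun Y => Odd #(insert a Y ∩ A))
  rw [card_powersetCard] at h_split
  omega

end OddEdges

theorem bpart_eq_card_oddEdges (k n : ℕ) (A : Finset (Fin n)) :
    bpart k n A = #(oddEdges (2 * k) univ A) := by
  rw [bpart, oddEdges, powersetCard_eq_filter, powerset_univ, filter_filter]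
  refine congrArg card (filter_congr fun X _ => ?_)
  constructor
  · rintro ⟨hX, hodd, -⟩
    exact ⟨hX, hodd⟩
  · rintro ⟨hX, hodd⟩
    exact ⟨hX, hodd, (odd_card_inter_iff_odd_card_sdiff A (hX ▸ even_two_mul k)).1 hodd⟩

theorem Fin.univ_eq_insert_last_map_castSuccEmb (m : ℕ) :
    (univ : Finset (Fin (m + 1))) = insert (Fin.last m) (univ.map Fin.castSuccEmb) := by
  ext i
  simp [Fin.exists_castSucc_eq, em]

theorem bpart_map_castSucc_add_bpart_insert_last {k : ℕ} (hk : 0 < k) {m : ℕ}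
    (A : Finset (Fin m)) :
    bpart k (m + 1) (A.map Fin.castSuccEmb) +
        bpart k (m + 1) (insert (Fin.last m) (A.map Fin.castSuccEmb)) =
      2 * bpart k m A + m.choose (2 * k - 1) := by
  have hlast {s : Finset (Fin m)} : Fin.last m ∉ s.map Fin.castSuccEmb := by
    simp [Fin.castSucc_ne_last]
  obtain ⟨r, hr⟩ : ∃ r, 2 * k = r + 1 := ⟨2 * k - 1, by omega⟩
  simp only [bpart_eq_card_oddEdges, Fin.univ_eq_insert_last_map_castSuccEmb, hr,
    Nat.add_sub_cancel]
  rw [card_oddEdges_insert_add hlast hlast, card_oddEdges_map, card_map, card_univ,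
    Fintype.card_fin]

/-- `b_{2k}(n) - b_{2k}(n-1) ≥ (1/2) binom(n-1, 2k-1)`. -/
theorem stmt_10 (k n : ℕ) (hk : 0 < k) (hn : 0 < n) :
    (bmax k (n - 1) : ℝ) + (1 / 2) * ((n - 1).choose (2 * k - 1) : ℝ) ≤ bmax k n := by
  obtain ⟨m, rfl⟩ : ∃ m, n = m + 1 := ⟨n - 1, by omega⟩
  rw [Nat.add_sub_cancel]
  obtain ⟨A, -, hA⟩ := exists_mem_eq_sup univ univ_nonempty (bpart k m)
  have h₀ : bpart k (m + 1) (A.map Fin.castSuccEmb) ≤ bmax k (m + 1) := le_sup (mem_univ _)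
  have h₁ : bpart k (m + 1) (insert (Fin.last m) (A.map Fin.castSuccEmb)) ≤ bmax k (m + 1) :=
    le_sup (mem_univ _)
  have h := bpart_map_castSucc_add_bpart_insert_last hk A
  have hnat : 2 * bmax k m + m.choose (2 * k - 1) ≤ 2 * bmax k (m + 1) := by
    rw [bmax, hA]; omega
  have hreal : 2 * (bmax k m : ℝ) + m.choose (2 * k - 1) ≤ 2 * bmax k (m + 1) := by
    exact_mod_cast hnat
  linarith
end

section
/- Suppose the edges of the complete graph K_s (s ≥ 2) are coloured with exactly s-1 colours so that every colour class is a matching and every set of 4 vertices spans edges of either exactly 3 or exactly 6 distinct colours. Then s = 2^p for some nonnegative integer p. -/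
/-!
Since each vertex meets `s - 1` edges of pairwise distinct colours, every colour class is a
perfect matching, i.e. colour `i` is a fixed-point-free involution `σᵢ` of the vertex set. For
`i ≠ j` and a vertex `v`, the edges `v σⱼv` and `σᵢv σⱼσᵢv` both have colour `j`, so the four
points span only three colours; then opposite edges share colours, which gives
`σᵢσⱼv = σⱼσᵢv`. The `σᵢ` therefore generate an elementary abelian `2`-group, which acts
transitively on the vertices, so `s` is the size of an orbit of a `2`-group.
-/

theorem Finset.card_image_le_five {α β : Type*} [DecidableEq α] [DecidableEq β] (f : α → β)
    {x₁ x₂ x₃ x₄ x₅ x₆ : α} (h : f x₂ = f x₅) :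
    (({x₁, x₂, x₃, x₄, x₅, x₆} : Finset α).image f).card ≤ 5 := by
  calc (({x₁, x₂, x₃, x₄, x₅, x₆} : Finset α).image f).card
      ≤ ({f x₁, f x₂, f x₃, f x₄, f x₆} : Finset β).card := by
        refine Finset.card_le_card fun y hy => ?_
        simp only [Finset.image_insert, Finset.image_singleton, Finset.mem_insert,
          Finset.mem_singleton, ← h] at hy ⊢
        tauto
    _ ≤ 5 := Finset.card_le_five

theorem IsPGroup.two_closure_of_pairwise_commute {G : Type*} [Group G] {S : Set G}
    (hcomm : S.Pairwise Commute) (hsq : ∀ x ∈ S, x * x = 1) :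
    IsPGroup 2 (Subgroup.closure S) := by
  have hcomm' : ∀ x ∈ Subgroup.closure S, ∀ y ∈ Subgroup.closure S, Commute x y := by
    have := Subgroup.isMulCommutative_closure (k := S) fun x hx y hy => by
      rcases eq_or_ne x y with rfl | hxy
      · rfl
      · exact hcomm hx hy hxy
    exact fun x hx y hy => congrArg Subtype.val (this.is_comm.comm ⟨x, hx⟩ ⟨y, hy⟩)
  have hsq' : ∀ g ∈ Subgroup.closure S, g * g = 1 := by
    intro g hg
    induction hg using Subgroup.closure_induction with
    | mem x hx => exact hsq x hx
    | one => exact mul_one 1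
    | mul x y hx hy ihx ihy => rw [(hcomm' y hy x hx).mul_mul_mul_comm, ihx, ihy, mul_one]
    | inv x _ ih => rw [← mul_inv_rev, ih, inv_one]
  exact fun g => ⟨1, Subtype.ext (by simpa [pow_two] using hsq' g g.2)⟩

theorem IsPGroup.exists_nat_card_eq_pow_of_isPretransitive {p : ℕ} [Fact p.Prime] {G α : Type*}
    [Group G] [MulAction G α] [Finite α] [Nonempty α] [MulAction.IsPretransitive G α]
    (hG : IsPGroup p G) : ∃ n, Nat.card α = p ^ n := by
  obtain ⟨a⟩ := ‹Nonempty α›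
  simpa [MulAction.orbit_eq_univ] using hG.card_orbit a

section EdgeColouring

variable {V ι : Type*} {c : Sym2 V → ι}

def IsProperEdgeColouring (c : Sym2 V → ι) : Prop :=
  ∀ x, Set.InjOn (fun y => c s(x, y)) {x}ᶜ

def sixEdges [DecidableEq V] (a b d e : V) : Finset (Sym2 V) :=
  {s(a, b), s(a, d), s(a, e), s(b, d), s(b, e), s(d, e)}

theorem isProperEdgeColouring_of_matching
    (hmatch : ∀ e f : Sym2 V, ¬ e.IsDiag → ¬ f.IsDiag → e ≠ f → c e = c f →
      ∀ v : V, ¬ (v ∈ e ∧ v ∈ f)) :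
    IsProperEdgeColouring c := by
  intro x y hy z hz hc
  by_contra hyz
  rw [Set.mem_compl_singleton_iff] at hy hz
  refine hmatch s(x, y) s(x, z) ?_ ?_ ?_ hc x ⟨Sym2.mem_mk_left x y, Sym2.mem_mk_left x z⟩
  · simpa using hy.symm
  · simpa using hz.symm
  · exact fun h => hyz (Sym2.congr_right.mp h)

namespace IsProperEdgeColouring

variable (hc : IsProperEdgeColouring c)
include hc

theorem ne {x y z : V} (hy : y ≠ x) (hz : z ≠ x) (hyz : y ≠ z) : c s(x, y) ≠ c s(x, z) :=
  fun h => hyz (hc x hy hz h)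

theorem eq_of_card_image_sixEdges_eq_three [DecidableEq V] [DecidableEq ι] {a b d e : V}
    (hab : a ≠ b) (had : a ≠ d) (hae : a ≠ e) (hbd : b ≠ d) (hbe : b ≠ e) (hde : d ≠ e)
    (h3 : ((sixEdges a b d e).image c).card = 3) : c s(d, e) = c s(a, b) := by
  -- The three colours at `a` are distinct, hence all colours; `de` meets `ad` and `ae`.
  have hsub : {c s(a, b), c s(a, d), c s(a, e)} ⊆ (sixEdges a b d e).image c := by
    intro y hy
    simp only [Finset.mem_insert, Finset.mem_singleton] at hy
    rcases hy with rfl | rfl | rfl <;> exact Finset.mem_image_of_mem c (by simp [sixEdges])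
  have hT : {c s(a, b), c s(a, d), c s(a, e)} = (sixEdges a b d e).image c := by
    refine Finset.eq_of_subset_of_card_le hsub ?_
    rw [h3, Finset.card_insert_of_notMem, Finset.card_pair (hc.ne had.symm hae.symm hde)]
    simp only [Finset.mem_insert, Finset.mem_singleton, not_or]
    exact ⟨hc.ne hab.symm had.symm hbd, hc.ne hab.symm hae.symm hbe⟩
  have hde_mem : c s(d, e) ∈ (sixEdges a b d e).image c :=
    Finset.mem_image_of_mem c (by simp [sixEdges])
  rw [← hT] at hde_mem
  simp only [Finset.mem_insert, Finset.mem_singleton] at hde_mem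
  rcases hde_mem with h | h | h
  · exact h
  · rw [Sym2.eq_swap (a := a)] at h
    exact absurd h (hc.ne hde.symm had hae.symm)
  · rw [Sym2.eq_swap (a := a), Sym2.eq_swap (a := d)] at h
    exact absurd h (hc.ne hde hae had.symm)

variable [Fintype V] [Fintype ι]

theorem bijective_colour_at (hcard : Fintype.card ι = Fintype.card V - 1) (x : V) :
    Function.Bijective fun y : {y // y ≠ x} => c s(x, y) := by
  classical
  refine (Fintype.bijective_iff_injective_and_card _).mpr ⟨fun y z h => ?_, ?_⟩
  · exact Subtype.ext (hc x y.2 z.2 h)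
  · simp [hcard, Fintype.card_subtype_compl]

variable (hcard : Fintype.card ι = Fintype.card V - 1)

noncomputable def partner (i : ι) (v : V) : V :=
  (Equiv.ofBijective _ (hc.bijective_colour_at hcard v)).symm i

theorem partner_ne (i : ι) (v : V) : hc.partner hcard i v ≠ v :=
  ((Equiv.ofBijective _ (hc.bijective_colour_at hcard v)).symm i).2

theorem colour_partner (i : ι) (v : V) : c s(v, hc.partner hcard i v) = i :=
  (Equiv.ofBijective _ (hc.bijective_colour_at hcard v)).apply_symm_apply i

theorem eq_partner {v w : V} (hw : w ≠ v) : w = hc.partner hcard (c s(v, w)) v :=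
  hc v hw (hc.partner_ne hcard _ _) (hc.colour_partner hcard _ _).symm

theorem partner_involutive (i : ι) : Function.Involutive (hc.partner hcard i) := fun v => by
  have h := hc.eq_partner hcard (hc.partner_ne hcard i v).symm
  rwa [Sym2.eq_swap, hc.colour_partner hcard, eq_comm] at h

theorem partner_comm [DecidableEq V] [DecidableEq ι]
    (h4 : ∀ a b d e : V, a ≠ b → a ≠ d → a ≠ e → b ≠ d → b ≠ e → d ≠ e →
      ((sixEdges a b d e).image c).card = 3 ∨ ((sixEdges a b d e).image c).card = 6)
    {i j : ι} (hij : i ≠ j) (v : V) :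
    hc.partner hcard i (hc.partner hcard j v) = hc.partner hcard j (hc.partner hcard i v) := by
  set b := hc.partner hcard i v with hb
  set d := hc.partner hcard j v with hd
  set e := hc.partner hcard j b with he
  have hvb : v ≠ b := (hc.partner_ne hcard i v).symm
  have hvd : v ≠ d := (hc.partner_ne hcard j v).symm
  have hbe : b ≠ e := (hc.partner_ne hcard j b).symm
  have hbd : b ≠ d := fun h => hij <| by
    rw [← hc.colour_partner hcard i v, ← hc.colour_partner hcard j v, ← hb, ← hd, h]
  have hve : v ≠ e := fun h => hbd <| by
    rw [hd, h, he, hc.partner_involutive hcard]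
  have hde : d ≠ e := fun h => hvb <| by
    rw [← hc.partner_involutive hcard j v, ← hd, h, he, hc.partner_involutive hcard]
  have hcolours : c s(v, d) = c s(b, e) := by
    rw [hc.colour_partner hcard, hc.colour_partner hcard]
  have h3 : ((sixEdges v b d e).image c).card = 3 :=
    (h4 v b d e hvb hvd hve hbd hbe hde).resolve_right fun h6 =>
      absurd (Finset.card_image_le_five c hcolours) (by rw [← sixEdges, h6]; decide)
  have hcde : c s(d, e) = i :=
    (hc.eq_of_card_image_sixEdges_eq_three hvb hvd hve hbd hbe hde h3).trans
      (hc.colour_partner hcard i v)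
  rw [hc.eq_partner hcard hde.symm, hcde]

noncomputable def partnerPerm (i : ι) : Equiv.Perm V :=
  (hc.partner_involutive hcard i).toPerm

theorem partnerPerm_mul_self (i : ι) : hc.partnerPerm hcard i * hc.partnerPerm hcard i = 1 :=
  Equiv.ext (hc.partner_involutive hcard i)

theorem pairwise_commute_partnerPerm [DecidableEq V] [DecidableEq ι]
    (h4 : ∀ a b d e : V, a ≠ b → a ≠ d → a ≠ e → b ≠ d → b ≠ e → d ≠ e →
      ((sixEdges a b d e).image c).card = 3 ∨ ((sixEdges a b d e).image c).card = 6) :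
    (Set.range (hc.partnerPerm hcard)).Pairwise Commute := by
  rintro _ ⟨i, rfl⟩ _ ⟨j, rfl⟩ hne
  exact Equiv.ext (hc.partner_comm hcard h4 (ne_of_apply_ne _ hne))

instance isPretransitive_closure_partnerPerm :
    MulAction.IsPretransitive (Subgroup.closure (Set.range (hc.partnerPerm hcard))) V := by
  refine ⟨fun v w => ?_⟩
  rcases eq_or_ne w v with rfl | hw
  · exact ⟨1, one_smul _ _⟩
  · exact ⟨⟨_, Subgroup.subset_closure ⟨c s(v, w), rfl⟩⟩, (hc.eq_partner hcard hw).symm⟩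

end IsProperEdgeColouring

end EdgeColouring

theorem stmt_12_general {V : Type*} [Fintype V] [DecidableEq V] (s : ℕ) (hs : 2 ≤ s)
    (hcard : Fintype.card V = s) (c : Sym2 V → Fin (s - 1))
    (hmatch : ∀ e f : Sym2 V, ¬ e.IsDiag → ¬ f.IsDiag → e ≠ f → c e = c f →
      ∀ v : V, ¬ (v ∈ e ∧ v ∈ f))
    (h4 : ∀ a b d e : V, a ≠ b → a ≠ d → a ≠ e → b ≠ d → b ≠ e → d ≠ e →
      (({s(a, b), s(a, d), s(a, e), s(b, d), s(b, e), s(d, e)} : Finset (Sym2 V)).image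
        c).card = 3 ∨
      (({s(a, b), s(a, d), s(a, e), s(b, d), s(b, e), s(d, e)} : Finset (Sym2 V)).image
        c).card = 6) :
    ∃ p : ℕ, s = 2 ^ p := by
  have hc := isProperEdgeColouring_of_matching hmatch
  have hι : Fintype.card (Fin (s - 1)) = Fintype.card V - 1 := by simp [hcard]
  have hG : IsPGroup 2 (Subgroup.closure (Set.range (hc.partnerPerm hι))) :=
    .two_closure_of_pairwise_commute (hc.pairwise_commute_partnerPerm hι h4)
      (by rintro _ ⟨i, rfl⟩; exact hc.partnerPerm_mul_self hι i)
  have : Nonempty V := Fintype.card_pos_iff.mp (by omega)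
  obtain ⟨p, hp⟩ := hG.exists_nat_card_eq_pow_of_isPretransitive (α := V)
  exact ⟨p, by rw [← hcard, ← Nat.card_eq_fintype_card, hp]⟩

/-- if the edges of `K_s` (`s ≥ 2`) are coloured with exactly `s-1` colours,
every colour class is a matching, and every 4 vertices span edges of exactly 3 or exactly
6 distinct colours, then `s = 2^p` for some `p`. -/
theorem stmt_12 {V : Type*} [Fintype V] [DecidableEq V] (s : ℕ) (hs : 2 ≤ s)
    (hcard : Fintype.card V = s) (c : Sym2 V → Fin (s - 1))
    (hmatch : ∀ e f : Sym2 V, ¬ e.IsDiag → ¬ f.IsDiag → e ≠ f → c e = c f →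
      ∀ v : V, ¬ (v ∈ e ∧ v ∈ f))
    (hall : ∀ i : Fin (s - 1), ∃ e : Sym2 V, ¬ e.IsDiag ∧ c e = i)
    (h4 : ∀ a b d e : V, a ≠ b → a ≠ d → a ≠ e → b ≠ d → b ≠ e → d ≠ e →
      (({s(a, b), s(a, d), s(a, e), s(b, d), s(b, e), s(d, e)} : Finset (Sym2 V)).image
        c).card = 3 ∨
      (({s(a, b), s(a, d), s(a, e), s(b, d), s(b, e), s(d, e)} : Finset (Sym2 V)).image
        c).card = 6) :
    ∃ p : ℕ, s = 2 ^ p :=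
  stmt_12_general s hs hcard c hmatch h4
end

section
/- Let W be a vector space of dimension p over GF(2) and let V = ⋃_{w∈W} V_w be a partition of a vertex set. Define a 2k-uniform hypergraph H where a 2k-set X = {x_1,...,x_{2k}} with x_i ∈ V_{w_i} is an edge iff w_1 + ... + w_{2k} ≠ 0. Then H contains no copy of C^(2k)_r for r = 2^p + 1, i.e., for any r pairwise disjoint k-sets P_1,...,P_r there exist i ≠ j with P_i ∪ P_j not an edge. -/
open Finset Function

theorem exists_ne_sum_union_eq_zero {ι V W : Type*} [Fintype ι] [DecidableEq V]
    [AddCommGroup W] [Module (ZMod 2) W] [Fintype W] (w : V → W) (P : ι → Finset V)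
    (hdisj : Pairwise (Disjoint on P)) (hcard : Fintype.card W < Fintype.card ι) :
    ∃ i j, i ≠ j ∧ ∑ x ∈ P i ∪ P j, w x = 0 := by
  obtain ⟨i, j, hij, hsum⟩ := Fintype.exists_ne_map_eq_of_card_lt (fun i ↦ ∑ x ∈ P i, w x) hcard
  refine ⟨i, j, hij, ?_⟩
  rw [sum_union (hdisj hij), hsum, ZModModule.add_self]

theorem stmt_16_general {V W : Type*} [DecidableEq V] [AddCommGroup W] [Module (ZMod 2) W]
    [Fintype W] (p : ℕ) (hW : Module.finrank (ZMod 2) W = p)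
    (w : V → W) (r : ℕ) (hr : r = 2 ^ p + 1)
    (P : Fin r → Finset V)
    (hdisj : ∀ i j, i ≠ j → Disjoint (P i) (P j)) :
    ∃ i j, i ≠ j ∧ ∑ x ∈ P i ∪ P j, w x = 0 := by
  have hcardW : Fintype.card W = 2 ^ p := by
    rw [Module.card_eq_pow_finrank (K := ZMod 2), hW, ZMod.card]
  exact exists_ne_sum_union_eq_zero w P (fun i j ↦ hdisj i j) (by simp [hcardW, hr])

/-- let `W` be a `p`-dimensional vector space over `GF(2)` and label the
vertices by elements of `W` (the partition `V = ⋃_{w} V_w`).  The `2k`-uniform hypergraph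
whose edges are the `2k`-sets `X` with `ΣX ≠ 0` contains no copy of `C^(2k)_r` for
`r = 2^p + 1`: among any `r` pairwise disjoint `k`-sets, some two have union with label
sum `0` (hence a non-edge). -/
theorem stmt_16 {V W : Type*} [DecidableEq V] [AddCommGroup W] [Module (ZMod 2) W]
    [Fintype W] (p k : ℕ) (hW : Module.finrank (ZMod 2) W = p)
    (w : V → W) (r : ℕ) (hr : r = 2 ^ p + 1)
    (P : Fin r → Finset V) (hcard : ∀ i, (P i).card = k)
    (hdisj : ∀ i j, i ≠ j → Disjoint (P i) (P j)) :
    ∃ i j, i ≠ j ∧ ∑ x ∈ P i ∪ P j, w x = 0 :=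
  stmt_16_general p hW w r hr P hdisj
end

section
/- For all integers k ≥ 1 and sufficiently large n relative to k, and for any integer C with C > 20^k and C√n ≤ n/2: d_{2k}(n, C√n) < (1/2)*binom(n-1, 2k-1) - 20^k * n^{k-1/2}, where d_{2k}(n,t) is the degree of a vertex in the larger part of B^(2k)(n,t). -/
/-- The degree `d_{2k}(n,t)` of a vertex in the part of size `n/2 + t` of `B^(2k)(n,t)`,
via the formula `d_{2k}(n,t) = (1/2)(binom(n-1,2k-1) + K_{2k-1}^{n-1}(n/2 + t - 1))`. -/
noncomputable def d2k (k n : ℕ) (t : ℝ) : ℝ :=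
  (1 / 2) * (((n - 1).choose (2 * k - 1) : ℝ) +
    kraw (2 * k - 1) (n - 1) ((n : ℝ) / 2 + t - 1))

/-!
Write `a = 2x - N` and `b = N - x`, so that `x = a + b`. The Krawtchouk polynomial is the
coefficient of `z^m` in `(1 - z)^x (1 + z)^(N - x) = (1 - z)^a (1 - z^2)^b`, whence
`K_m^N(x) = ∑_j (-1)^(m-j) binom(a, m - 2j) binom(b, j)`.
For `x = n/2 + C√n - 1` and `N = n - 1` we get `a = 2C√n - 1` and `0 ≤ b ≤ n/2`; when `m` is
odd the term `j = 0` equals `-binom(a, m) ≈ -(2C√n)^m / m!`, and the other terms form a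
geometric tail with ratio `≤ m^2 (n/2) / (2C√n)^2 = m^2 / (8C^2)`, which is tiny because `C > 20^k`.
Hence `K_{2k-1}^{n-1}(n/2 + C√n - 1) ≲ -(2C)^m n^(k-1/2) / m!`, and `C > 20^k` makes this
smaller than `-2 · 20^k n^(k-1/2)`.
-/

open Finset

lemma rchoose_eq_ringChoose (x : ℝ) (j : ℕ) : rchoose x j = Ring.choose x j := by
  rw [Ring.choose_eq_smul, smul_eq_mul, rchoose, div_eq_inv_mul, ← Polynomial.aeval_eq_smeval,
    ← descPochhammer_eval_eq_prod_range, Polynomial.aeval_def, Polynomial.eval₂_eq_eval_map,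
    descPochhammer_map]

lemma rchoose_natCast_s18 (N j : ℕ) : rchoose N j = N.choose j := by
  rw [rchoose_eq_ringChoose, Ring.choose_natCast]

lemma rchoose_zero (x : ℝ) : rchoose x 0 = 1 := by simp [rchoose]

section AlternatingConvolution

open Polynomial

lemma coeff_one_sub_X_pow (N i : ℕ) :
    ((1 - X : ℝ[X]) ^ N).coeff i = (-1) ^ i * N.choose i := by
  have h : (1 - X : ℝ[X]) = C (-1) * X + 1 := by simp [sub_eq_add_neg, add_comm]
  rw [h, add_pow, finsetSum_coeff]
  simp only [one_pow, mul_one, mul_pow, ← C_pow, ← C_eq_natCast, mul_right_comm _ (X ^ _),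
    ← C_mul, coeff_C_mul_X_pow, sum_ite_eq, mem_range]
  split_ifs with hi
  · rfl
  · simp [Nat.choose_eq_zero_of_lt (not_lt.mp hi)]

lemma sum_antidiagonal_neg_one_pow_mul_choose_mul_choose (N u : ℕ) :
    ∑ p ∈ antidiagonal u, (-1 : ℝ) ^ p.1 * N.choose p.1 * N.choose p.2 =
      if Even u then (-1 : ℝ) ^ (u / 2) * N.choose (u / 2) else 0 := by
  have h : ((1 - X) ^ N * (1 + X) ^ N : ℝ[X]) = expand ℝ 2 ((1 - X) ^ N) := by
    rw [← mul_pow, map_pow, map_sub, map_one, expand_X]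
    ring
  have := congrArg (coeff · u) h
  simp only [coeff_mul, coeff_one_sub_X_pow, coeff_one_add_X_pow, coeff_expand two_pos] at this
  simpa [even_iff_two_dvd, mul_assoc] using this

noncomputable def rchoosePoly (j : ℕ) : ℝ[X] :=
  C (j.factorial : ℝ)⁻¹ * descPochhammer ℝ j

lemma eval_rchoosePoly (x : ℝ) (j : ℕ) : (rchoosePoly j).eval x = rchoose x j := by
  rw [rchoosePoly, eval_mul, eval_C, descPochhammer_eval_eq_prod_range, rchoose, inv_mul_eq_div]

/-- The coefficient identity behind `(1 - z)^b (1 + z)^b = (1 - z^2)^b`. Both sides are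
polynomials in `b`, so it suffices to check it for `b ∈ ℕ`. -/
lemma sum_antidiagonal_neg_one_pow_mul_rchoose_mul_rchoose (b : ℝ) (u : ℕ) :
    ∑ p ∈ antidiagonal u, (-1 : ℝ) ^ p.1 * rchoose b p.1 * rchoose b p.2 =
      if Even u then (-1) ^ (u / 2) * rchoose b (u / 2) else 0 := by
  have key : ∑ p ∈ antidiagonal u, C ((-1 : ℝ) ^ p.1) * rchoosePoly p.1 * rchoosePoly p.2 =
      if Even u then C ((-1) ^ (u / 2)) * rchoosePoly (u / 2) else 0 := by
    apply eq_of_infinite_eval_eq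
    apply (Set.infinite_range_of_injective Nat.cast_injective).mono
    rintro _ ⟨N, rfl⟩
    simpa [eval_finsetSum, eval_rchoosePoly, rchoose_natCast_s18, apply_ite (eval _)] using
      sum_antidiagonal_neg_one_pow_mul_choose_mul_choose N u
  simpa [eval_finsetSum, eval_rchoosePoly, apply_ite (eval b)] using congrArg (eval b) key

end AlternatingConvolution

section KrawtchoukExpansion

open PowerSeries

lemma kraw_eq_coeff (m N : ℕ) (x : ℝ) :
    kraw m N x = coeff m (rescale (-1) (PowerSeries.binomialSeries ℝ x) *
      PowerSeries.binomialSeries ℝ (N - x)) := by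
  rw [kraw, coeff_mul, Nat.sum_antidiagonal_eq_sum_range_succ
    (fun i l => coeff i (rescale (-1) (PowerSeries.binomialSeries ℝ x)) *
      coeff l (PowerSeries.binomialSeries ℝ (N - x)))]
  simp [coeff_rescale, rchoose_eq_ringChoose]

lemma kraw_eq_sum_antidiagonal (m N : ℕ) (x : ℝ) :
    kraw m N x = ∑ p ∈ antidiagonal m, (-1) ^ p.1 * rchoose (2 * x - N) p.1 *
      if Even p.2 then (-1) ^ (p.2 / 2) * rchoose (N - x) (p.2 / 2) else 0 := by
  have hx : PowerSeries.binomialSeries ℝ x =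
      PowerSeries.binomialSeries ℝ (2 * x - N) * PowerSeries.binomialSeries ℝ (N - x) := by
    rw [← binomialSeries_add]; ring_nf
  rw [kraw_eq_coeff, hx, map_mul (rescale (-1 : ℝ)), mul_assoc, coeff_mul]
  refine sum_congr rfl fun p _ => ?_
  rw [coeff_mul, ← sum_antidiagonal_neg_one_pow_mul_rchoose_mul_rchoose]
  simp [coeff_rescale, rchoose_eq_ringChoose, mul_assoc]

end KrawtchoukExpansion

lemma sum_antidiagonal_ite_even {M : Type*} [AddCommMonoid M] (m : ℕ) (f : ℕ → ℕ → M) :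
    ∑ p ∈ antidiagonal m, (if Even p.2 then f p.1 (p.2 / 2) else 0) =
      ∑ j ∈ range (m / 2 + 1), f (m - 2 * j) j := by
  rw [← sum_filter]
  apply sum_nbij' (fun p => p.2 / 2) (fun j => (m - 2 * j, 2 * j))
  · simp only [mem_filter, HasAntidiagonal.mem_antidiagonal, mem_range, and_imp, Prod.forall]
    omega
  · simp only [mem_filter, HasAntidiagonal.mem_antidiagonal, mem_range, Nat.even_mul, even_two,
      true_or, and_true]
    omega
  · simp only [mem_filter, HasAntidiagonal.mem_antidiagonal, Prod.forall, Prod.mk.injEq]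
    rintro a b ⟨hab, ⟨c, rfl⟩⟩
    omega
  · simp only [mem_range, Nat.mul_div_cancel_left _ two_pos, implies_true]
  · simp only [mem_filter, HasAntidiagonal.mem_antidiagonal, Prod.forall]
    rintro a b ⟨hab, ⟨c, rfl⟩⟩
    congr 1; omega

lemma kraw_eq_sum (m N : ℕ) (x : ℝ) :
    kraw m N x = ∑ j ∈ range (m / 2 + 1),
      (-1 : ℝ) ^ (m - 2 * j) * rchoose (2 * x - N) (m - 2 * j) *
        ((-1) ^ j * rchoose (N - x) j) := by
  simp only [kraw_eq_sum_antidiagonal, mul_ite, mul_zero]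
  exact sum_antidiagonal_ite_even m
    (fun r j => (-1 : ℝ) ^ r * rchoose (2 * x - N) r * ((-1) ^ j * rchoose (N - x) j))

lemma abs_rchoose_le {x M : ℝ} {j : ℕ} (h : ∀ i < j, |x - i| ≤ M) :
    |rchoose x j| ≤ M ^ j / j.factorial := by
  rw [rchoose, abs_div, Nat.abs_cast, abs_prod, show M ^ j = ∏ _i ∈ range j, M by simp]
  gcongr with i hi
  exact h i (mem_range.mp hi)

lemma le_rchoose {x L : ℝ} {j : ℕ} (hL : 0 ≤ L) (h : ∀ i < j, L ≤ x - i) :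
    L ^ j / j.factorial ≤ rchoose x j := by
  rw [rchoose, show L ^ j = ∏ _i ∈ range j, L by simp]
  gcongr with i hi
  exact h i (mem_range.mp hi)

lemma one_sub_sq_div_mul_le_rchoose {T : ℝ} {m : ℕ} (hT : 0 < T) (hmT : m ≤ T) :
    (1 - m ^ 2 / T) * (T ^ m / m.factorial) ≤ rchoose (T - 1) m := by
  have hlow : (T - m) ^ m / m.factorial ≤ rchoose (T - 1) m :=
    le_rchoose (by linarith) fun i hi => by
      have : (i : ℝ) + 1 ≤ m := by exact_mod_cast hi
      linarith
  have hbern : 1 + m * (-(m / T)) ≤ (1 + -(m / T)) ^ m := by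
    refine one_add_mul_le_pow ?_ m
    have : (m : ℝ) / T ≤ 1 := (div_le_one hT).mpr hmT
    linarith
  calc (1 - m ^ 2 / T) * (T ^ m / m.factorial)
      = (1 + m * (-(m / T))) * T ^ m / m.factorial := by ring
    _ ≤ (1 + -(m / T)) ^ m * T ^ m / m.factorial := by gcongr
    _ = (T - m) ^ m / m.factorial := by
        rw [← mul_pow]; congr 2; field_simp; ring
    _ ≤ rchoose (T - 1) m := hlow

lemma factorial_le_factorial_sub_mul_pow {m l : ℕ} (hl : l ≤ m) :
    m.factorial ≤ (m - l).factorial * m ^ l := by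
  rw [← Nat.factorial_mul_descFactorial hl]
  exact Nat.mul_le_mul_left _ (Nat.descFactorial_le_pow m l)

lemma abs_rchoose_mul_abs_rchoose_le {T M b : ℝ} {m j : ℕ} (hT : 0 < T) (hmT : m ≤ T)
    (hb : 0 ≤ b) (hbM : b ≤ M) (hmM : m ≤ M) (hj : 2 * j ≤ m) :
    |rchoose (T - 1) (m - 2 * j)| * |rchoose b j| ≤
      T ^ m / m.factorial * (m ^ 2 * M / T ^ 2) ^ j := by
  have hj' : (2 * j : ℝ) ≤ m := by exact_mod_cast hj
  have h₁ : |rchoose (T - 1) (m - 2 * j)| ≤ T ^ (m - 2 * j) / (m - 2 * j).factorial :=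
    abs_rchoose_le fun i hi => by
      have : (i : ℝ) + 1 ≤ m := by exact_mod_cast (by omega : i + 1 ≤ m)
      rw [abs_le]; constructor <;> linarith
  have h₂ : |rchoose b j| ≤ M ^ j / j.factorial :=
    abs_rchoose_le fun i hi => by
      have : (i : ℝ) + 1 ≤ j := by exact_mod_cast hi
      rw [abs_le]; constructor <;> linarith
  have h₃ : (m.factorial : ℝ) ≤ (m - 2 * j).factorial * m ^ (2 * j) := by
    exact_mod_cast factorial_le_factorial_sub_mul_pow hj
  have hM : 0 ≤ M := hb.trans hbM
  calc |rchoose (T - 1) (m - 2 * j)| * |rchoose b j|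
      ≤ T ^ (m - 2 * j) / (m - 2 * j).factorial * (M ^ j / j.factorial) := by gcongr
    _ ≤ T ^ (m - 2 * j) / (m - 2 * j).factorial * M ^ j := by
        gcongr; exact div_le_self (by positivity) (by exact_mod_cast j.factorial_pos)
    _ ≤ T ^ (m - 2 * j) * (m ^ (2 * j) * M ^ j) / m.factorial := by
        rw [div_mul_eq_mul_div, div_le_div_iff₀ (by positivity) (by positivity)]
        calc T ^ (m - 2 * j) * M ^ j * m.factorial
            ≤ T ^ (m - 2 * j) * M ^ j * ((m - 2 * j).factorial * m ^ (2 * j)) := by gcongr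
          _ = _ := by ring
    _ = T ^ m / m.factorial * (m ^ 2 * M / T ^ 2) ^ j := by
        rw [show T ^ m = T ^ (m - 2 * j) * (T ^ 2) ^ j by
          rw [← pow_mul, ← pow_add, Nat.sub_add_cancel hj], div_pow, mul_pow, ← pow_mul]
        field_simp
        ring

lemma sum_range_pow_succ_le {ρ : ℝ} (h₀ : 0 ≤ ρ) (h₁ : ρ ≤ 1 / 2) (n : ℕ) :
    ∑ j ∈ range n, ρ ^ (j + 1) ≤ 2 * ρ := by
  calc ∑ j ∈ range n, ρ ^ (j + 1)
      ≤ ∑ j ∈ range n, ρ * (1 / 2) ^ j := sum_le_sum fun j _ => by rw [pow_succ']; gcongr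
    _ = ρ * ∑ j ∈ range n, (1 / 2 : ℝ) ^ j := (mul_sum ..).symm
    _ ≤ ρ * 2 := by gcongr; exact sum_geometric_two_le n
    _ = 2 * ρ := mul_comm ..

lemma kraw_le {m N : ℕ} {x T M : ℝ} (hm : Odd m) (hT : 0 < T) (hmT : m ≤ T)
    (hx : 2 * x - N = T - 1) (hb : 0 ≤ N - x) (hbM : N - x ≤ M) (hmM : m ≤ M)
    (hρ : 2 * (m ^ 2 * M) ≤ T ^ 2) :
    kraw m N x ≤ -(1 - m ^ 2 / T - 2 * (m ^ 2 * M / T ^ 2)) * (T ^ m / m.factorial) := by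
  set B := T ^ m / m.factorial
  set ρ := m ^ 2 * M / T ^ 2
  have hM : 0 ≤ M := hb.trans hbM
  have hρ₀ : 0 ≤ ρ := by positivity
  have hρ₁ : ρ ≤ 1 / 2 := by rw [div_le_iff₀ (by positivity)]; linarith
  have hB : 0 ≤ B := by unfold B; positivity
  have htail : ∑ j ∈ range (m / 2), (-1 : ℝ) ^ (m - 2 * (j + 1)) *
      rchoose (T - 1) (m - 2 * (j + 1)) * ((-1) ^ (j + 1) * rchoose (N - x) (j + 1)) ≤
        B * (2 * ρ) :=
    calc _ ≤ ∑ j ∈ range (m / 2), B * ρ ^ (j + 1) := sum_le_sum fun j hj => by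
          refine (le_abs_self _).trans (le_of_eq_of_le ?_
            (abs_rchoose_mul_abs_rchoose_le hT hmT hb hbM hmM (by rw [mem_range] at hj; omega)))
          simp [abs_mul]
      _ ≤ B * (2 * ρ) := by rw [← mul_sum]; gcongr; exact sum_range_pow_succ_le hρ₀ hρ₁ _
  have hmain := one_sub_sq_div_mul_le_rchoose hT hmT
  rw [kraw_eq_sum, sum_range_succ', hx]
  simp only [mul_zero, Nat.sub_zero, hm.neg_one_pow, pow_zero, rchoose_zero, mul_one]
  linarith

lemma sq_two_mul_sub_one_le_twenty_pow (k : ℕ) : (2 * k - 1) ^ 2 ≤ 20 ^ k := by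
  induction k with
  | zero => simp
  | succ k ih =>
    rcases Nat.eq_zero_or_pos k with rfl | hk
    · norm_num
    · obtain ⟨j, hj⟩ : ∃ j, 2 * k - 1 = j + 1 := ⟨2 * k - 2, by omega⟩
      rw [show 2 * (k + 1) - 1 = j + 3 by omega, pow_succ 20 k]
      rw [hj] at ih
      nlinarith

lemma two_mul_mul_factorial_lt {m : ℕ} {A C : ℝ} (hm : 1 ≤ m) (hA : 0 ≤ A)
    (hAC : A + 1 ≤ C) (hmC : (m : ℝ) ^ 2 ≤ C) :
    2 * A * m.factorial < (1 - m ^ 2 / (2 * C ^ 2)) * (2 * C) ^ m := by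
  have hC : 0 < C := by linarith
  have hm' : (1 : ℝ) ≤ m := by exact_mod_cast hm
  have hfact : (m.factorial : ℝ) ≤ (2 * C) ^ (m - 1) := by
    calc (m.factorial : ℝ) ≤ ((m - (m - 1)).factorial * m ^ (m - 1) : ℕ) := by
          exact_mod_cast factorial_le_factorial_sub_mul_pow (Nat.sub_le m 1)
      _ = (m : ℝ) ^ (m - 1) := by simp [Nat.sub_sub_self hm]
      _ ≤ (2 * C) ^ (m - 1) := by gcongr; nlinarith
  have hlead : 2 * A < (1 - m ^ 2 / (2 * C ^ 2)) * (2 * C) := by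
    have : (m : ℝ) ^ 2 / C ≤ 1 := (div_le_one hC).mpr hmC
    calc 2 * A < 2 * C - 1 := by linarith
      _ ≤ 2 * C - m ^ 2 / C := by linarith
      _ = (1 - m ^ 2 / (2 * C ^ 2)) * (2 * C) := by field_simp
  calc 2 * A * m.factorial ≤ 2 * A * (2 * C) ^ (m - 1) := by gcongr
    _ < (1 - m ^ 2 / (2 * C ^ 2)) * (2 * C) * (2 * C) ^ (m - 1) := by gcongr
    _ = (1 - m ^ 2 / (2 * C ^ 2)) * (2 * C) ^ m := by
        rw [mul_assoc, ← pow_succ', Nat.sub_add_cancel hm]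

lemma kraw_le_of_mul_sqrt_le_half {m n : ℕ} {C : ℝ} (hm : Odd m) (hn : 1 ≤ n) (hmC : m ≤ C)
    (hCn : C * √n ≤ n / 2) :
    kraw m (n - 1) (n / 2 + C * √n - 1) ≤
      -(1 - m ^ 2 / (2 * C ^ 2)) * ((2 * C * √n) ^ m / m.factorial) := by
  set s := √n
  have hs1 : 1 ≤ s := Real.one_le_sqrt.mpr (by exact_mod_cast hn)
  have hns : (n : ℝ) = s ^ 2 := (Real.sq_sqrt n.cast_nonneg).symm
  have hm1 : (1 : ℝ) ≤ m := by exact_mod_cast hm.pos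
  have hC0 : 0 < C := by linarith
  have hCs : 2 * C ≤ s := by nlinarith
  have hm4 : (m : ℝ) ^ 2 ≤ 4 * C ^ 2 := by nlinarith
  have hN : ((n - 1 : ℕ) : ℝ) = n - 1 := by rw [Nat.cast_sub hn]; push_cast; ring
  have hkraw := kraw_le (N := n - 1) (x := n / 2 + C * s - 1) (T := 2 * C * s) (M := n / 2) hm
    (by positivity) (by nlinarith) (by rw [hN]; ring) (by rw [hN]; linarith)
    (by rw [hN]; nlinarith) (by nlinarith)
    (by rw [hns]; nlinarith [mul_le_mul_of_nonneg_right hm4 (sq_nonneg s)])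
  have h₁ : (m : ℝ) ^ 2 / (2 * C * s) ≤ m ^ 2 / (4 * C ^ 2) :=
    div_le_div_of_nonneg_left (sq_nonneg _) (by positivity) (by nlinarith)
  have h₂ : 2 * (m ^ 2 * (n / 2) / (2 * C * s) ^ 2) = (m : ℝ) ^ 2 / (4 * C ^ 2) := by
    rw [hns]; field_simp; ring
  have h₃ : (m : ℝ) ^ 2 / (4 * C ^ 2) + m ^ 2 / (4 * C ^ 2) = m ^ 2 / (2 * C ^ 2) := by
    field_simp; ring
  refine hkraw.trans ?_
  rw [neg_mul, neg_mul, neg_le_neg_iff]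
  exact mul_le_mul_of_nonneg_right (by linarith) (by positivity)

lemma kraw_lt_of_mul_sqrt_le_half {k n C : ℕ} (hk : 1 ≤ k) (hn : 1 ≤ n) (hC : 20 ^ k < C)
    (hCn : C * √n ≤ n / 2) :
    kraw (2 * k - 1) (n - 1) (n / 2 + C * √n - 1) < -(2 * 20 ^ k * √n ^ (2 * k - 1)) := by
  set m := 2 * k - 1
  have hmC : (m : ℝ) ^ 2 ≤ C := by
    exact_mod_cast (sq_two_mul_sub_one_le_twenty_pow k).trans hC.le
  have hm1 : (1 : ℝ) ≤ m := by exact_mod_cast (by omega : 1 ≤ m)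
  have hnum := two_mul_mul_factorial_lt (m := m) (A := 20 ^ k) (C := C) (by omega) (by positivity)
    (by exact_mod_cast hC) hmC
  refine (kraw_le_of_mul_sqrt_le_half ⟨k - 1, by omega⟩ hn (by nlinarith) hCn).trans_lt ?_
  have hfact : (0 : ℝ) < m.factorial := by positivity
  rw [neg_mul, neg_lt_neg_iff]
  calc 2 * 20 ^ k * √n ^ m = 2 * 20 ^ k * m.factorial / m.factorial * √n ^ m := by field_simp
    _ < (1 - m ^ 2 / (2 * C ^ 2)) * (2 * C) ^ m / m.factorial * √n ^ m := by gcongr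
    _ = (1 - m ^ 2 / (2 * C ^ 2)) * ((2 * C * √n) ^ m / m.factorial) := by rw [mul_pow]; ring

/-- for `k ≥ 1`, sufficiently large `n`, and any integer `C` with
`C > 20^k` and `C√n ≤ n/2`:
`d_{2k}(n, C√n) < (1/2) binom(n-1, 2k-1) - 20^k n^{k-1/2}`. -/
theorem stmt_18 (k : ℕ) (hk : 1 ≤ k) :
    ∃ n0 : ℕ, ∀ n : ℕ, n0 ≤ n → ∀ C : ℕ, 20 ^ k < C →
      (C : ℝ) * Real.sqrt n ≤ (n : ℝ) / 2 →
      d2k k n ((C : ℝ) * Real.sqrt n) <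
        (1 / 2) * ((n - 1).choose (2 * k - 1) : ℝ) -
          20 ^ k * ((n : ℝ) ^ k / Real.sqrt n) := by
  -- `C√n ≤ n/2` already forces `√n ≥ 2C`; only `n = 0`, where the claim fails, is excluded.
  refine ⟨1, fun n hn C hC hCn => ?_⟩
  have hs : 0 < √(n : ℝ) := Real.sqrt_pos.mpr (by exact_mod_cast hn)
  have hpow : (n : ℝ) ^ k / √n = √n ^ (2 * k - 1) := by
    rw [div_eq_iff hs.ne', ← pow_succ, Nat.sub_add_cancel (by omega), pow_mul,
      Real.sq_sqrt n.cast_nonneg]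
  rw [d2k, hpow]
  linarith [kraw_lt_of_mul_sqrt_le_half hk hn hC hCn]
end
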